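/- Let u₁, v₁ ∈ ℝ^m and u₂, v₂ ∈ ℝ^n be unit vectors, and let u, v ∈ ℝ^{m+n} be the concatenated vectors u = (u₁, u₂) and v = (v₁, v₂). Then sin²∠(u₁, v₁) + sin²∠(u₂, v₂) ≤ 2·sin²∠(u, v). -/

import Mathlib

open MeasureTheory ProbabilityTheory Matrix

theorem Matrix.isHermitian_transpose_mul_self {α : Type*} {m n : Type*} [CommSemiring α] [StarRing α]
    [TrivialStar α] [Fintype m] (A : Matrix m n α) : (Aᵀ * A).IsHermitian := by
  rw [IsHermitian, conjTranspose_eq_transpose_of_trivial, transpose_mul, transpose_transpose]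

noncomputable def sval {m n : ℕ} (A : Matrix (Fin m) (Fin n) ℝ) (k : ℕ) : ℝ :=
  if h : k - 1 < n then
    Real.sqrt (((Matrix.isHermitian_transpose_mul_self A).eigenvalues ∘
      Tuple.sort (Matrix.isHermitian_transpose_mul_self A).eigenvalues)
      (Fin.rev ⟨k - 1, h⟩))
  else 0

noncomputable def spNorm {m n : Type*} [Fintype m] [Fintype n] [DecidableEq n]
    (A : Matrix m n ℝ) : ℝ :=
  ‖LinearMap.toContinuousLinearMap (Matrix.toEuclideanLin A)‖

noncomputable def sinAngle {d : ℕ} (u v : Fin d → ℝ) : ℝ :=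
  Real.sqrt (1 - (u ⬝ᵥ v) ^ 2 / ((u ⬝ᵥ u) * (v ⬝ᵥ v)))

def Concentrated {Ω : Type*} [MeasurableSpace Ω] (μ : Measure Ω) {m n : ℕ}
    (E : Ω → Matrix (Fin m) (Fin n) ℝ) (C₁ c₁ γ : ℝ) : Prop :=
  ∀ (u : Fin m → ℝ) (v : Fin n → ℝ), u ⬝ᵥ u = 1 → v ⬝ᵥ v = 1 →
    ∀ t : ℝ, 0 < t →
      μ {ω | t < |u ⬝ᵥ ((E ω) *ᵥ v)|} ≤ ENNReal.ofReal (C₁ * Real.exp (-c₁ * t ^ γ))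

noncomputable def symMat {m n : ℕ} (E : Matrix (Fin m) (Fin n) ℝ) :
    Matrix (Fin (m + n)) (Fin (m + n)) ℝ :=
  (Matrix.reindex finSumFinEquiv finSumFinEquiv) (Matrix.fromBlocks 0 E Eᵀ 0)

noncomputable def eigVal {d : ℕ} (M : Matrix (Fin d) (Fin d) ℝ) (k : ℕ) : ℝ := by
  classical
  exact if hM : M.IsHermitian then
    (if h : k - 1 < d then
      ((hM.eigenvalues ∘ Tuple.sort hM.eigenvalues) (Fin.rev ⟨k - 1, h⟩))
    else 0)
  else 0

noncomputable def toE {n : ℕ} (v : Fin n → ℝ) : EuclideanSpace ℝ (Fin n) :=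
  (WithLp.equiv 2 (Fin n → ℝ)).symm v

noncomputable def projSub {n : ℕ} (K : Submodule ℝ (EuclideanSpace ℝ (Fin n))) :
    EuclideanSpace ℝ (Fin n) →L[ℝ] EuclideanSpace ℝ (Fin n) :=
  K.subtypeL.comp K.orthogonalProjectionOnto

noncomputable def projSpan {n : ℕ} (S : Set (Fin n → ℝ)) :
    EuclideanSpace ℝ (Fin n) →L[ℝ] EuclideanSpace ℝ (Fin n) :=
  projSub (Submodule.span ℝ (toE '' S))

noncomputable def sinAngleSub {n : ℕ} (S T : Set (Fin n → ℝ)) : ℝ :=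
  ‖projSpan S - projSpan T‖

def IsBernoulliMatrix {Ω : Type*} [MeasurableSpace Ω] (μ : Measure Ω) {n : ℕ}
    (E : Ω → Matrix (Fin n) (Fin n) ℝ) : Prop :=
  (∀ i j, Measurable fun ω => E ω i j) ∧
  iIndepFun (fun (p : Fin n × Fin n) ω => E ω p.1 p.2) μ ∧
  (∀ i j, μ {ω | E ω i j = 1} = ENNReal.ofReal (1/2) ∧
          μ {ω | E ω i j = -1} = ENNReal.ofReal (1/2))


/-
With `a = u₁ ⬝ᵥ v₁` and `b = u₂ ⬝ᵥ v₂`, the concatenated vectors have squared length 2 and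
inner product `a + b`, so the claim reads `(1 - a²) + (1 - b²) ≤ 2 (1 - (a + b)² / 4)`,
which is `0 ≤ (a - b)²`.
-/

theorem dotProduct_sq_le_dotProduct_self_mul_dotProduct_self {R ι : Type*} [CommRing R]
    [LinearOrder R] [IsStrictOrderedRing R] [Fintype ι] (u v : ι → R) :
    (u ⬝ᵥ v) ^ 2 ≤ (u ⬝ᵥ u) * (v ⬝ᵥ v) := by
  simpa only [dotProduct, sq] using Finset.sum_mul_sq_le_sq_mul_sq Finset.univ u v

theorem Fin.append_dotProduct_append {R : Type*} [CommSemiring R] {m n : ℕ}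
    (u₁ v₁ : Fin m → R) (u₂ v₂ : Fin n → R) :
    Fin.append u₁ u₂ ⬝ᵥ Fin.append v₁ v₂ = u₁ ⬝ᵥ v₁ + u₂ ⬝ᵥ v₂ := by
  simp [dotProduct, Fin.sum_univ_add]

theorem sinAngle_sq {d : ℕ} (u v : Fin d → ℝ) :
    sinAngle u v ^ 2 = 1 - (u ⬝ᵥ v) ^ 2 / ((u ⬝ᵥ u) * (v ⬝ᵥ v)) := by
  have hcs := dotProduct_sq_le_dotProduct_self_mul_dotProduct_self u v
  exact Real.sq_sqrt <| sub_nonneg.mpr <| div_le_one_of_le₀ hcs ((sq_nonneg _).trans hcs)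

theorem stmt11 {m n : ℕ} (u₁ v₁ : Fin m → ℝ) (u₂ v₂ : Fin n → ℝ)
    (hu₁ : u₁ ⬝ᵥ u₁ = 1) (hv₁ : v₁ ⬝ᵥ v₁ = 1)
    (hu₂ : u₂ ⬝ᵥ u₂ = 1) (hv₂ : v₂ ⬝ᵥ v₂ = 1) :
    sinAngle u₁ v₁ ^ 2 + sinAngle u₂ v₂ ^ 2 ≤
      2 * sinAngle (Fin.append u₁ u₂) (Fin.append v₁ v₂) ^ 2 := by
  simp only [sinAngle_sq, Fin.append_dotProduct_append, hu₁, hv₁, hu₂, hv₂]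
  nlinarith [sq_nonneg (u₁ ⬝ᵥ v₁ - u₂ ⬝ᵥ v₂)]
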